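/- For integers a, b, c ≥ 2: ζ(a,b,c) = −ζ(b,c,a) − ζ(c,a,b) + ζ(a+b+c) + ζ(a)ζ(b,c) + ζ(b)ζ(c,a) + ζ(c)ζ(a,b) − ζ(a)ζ(b)ζ(c). -/

import Mathlib

/-!
Every term of the identity is a sum of the one weight `m⁻ᵃ n⁻ᵇ p⁻ᶜ` over a set of triples of
positive integers `(m, n, p)`: `ζ(a,b,c)`, `ζ(b,c,a)`, `ζ(c,a,b)` over `m > n > p`, `n > p > m`,
`p > m > n`; `ζ(a+b+c)` over the diagonal; `ζ(a)ζ(b,c)`, `ζ(b)ζ(c,a)`, `ζ(c)ζ(a,b)` over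
`n > p`, `p > m`, `m > n`; and `ζ(a)ζ(b)ζ(c)` over all triples. In any linear order
`1[x>y>z] + 1[y>z>x] + 1[z>x>y] + 1 = 1[x=y=z] + 1[y>z] + 1[z>x] + 1[x>y]`,
and for `a, b, c ≥ 2` the weight is summable, so the identity follows by summation.
-/

noncomputable def zeta1 (k : ℕ) : ℝ := ∑' n : ℕ+, 1 / (n : ℝ) ^ k

noncomputable def zeta2 (a b : ℕ) : ℝ :=
  ∑' p : {p : ℕ × ℕ // p.2 < p.1 ∧ 0 < p.2},
    1 / ((p.val.1 : ℝ) ^ a * (p.val.2 : ℝ) ^ b)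

noncomputable def zeta3 (a b c : ℕ) : ℝ :=
  ∑' t : {t : ℕ × ℕ × ℕ // t.2.1 < t.1 ∧ t.2.2 < t.2.1 ∧ 0 < t.2.2},
    1 / ((t.val.1 : ℝ) ^ a * (t.val.2.1 : ℝ) ^ b * (t.val.2.2 : ℝ) ^ c)

open Set

section CyclicInclusionExclusion

variable {α E : Type*} [LinearOrder α]

theorem indicator_cyclic_add_eq [AddCommMonoid E] (f : α × α × α → E) (t : α × α × α) :
    {t | t.2.1 < t.1 ∧ t.2.2 < t.2.1}.indicator f t
        + {t | t.2.2 < t.2.1 ∧ t.1 < t.2.2}.indicator f t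
        + {t | t.1 < t.2.2 ∧ t.2.1 < t.1}.indicator f t + f t
      = {t | t.1 = t.2.1 ∧ t.2.1 = t.2.2}.indicator f t + {t | t.2.2 < t.2.1}.indicator f t
        + {t | t.1 < t.2.2}.indicator f t + {t | t.2.1 < t.1}.indicator f t := by
  obtain ⟨x, y, z⟩ := t
  simp only [indicator_apply, mem_ofPred_eq]
  split_ifs <;> first | abel1 | (exfalso; grind)

theorem tsum_cyclic_add_eq [NormedAddCommGroup E] [CompleteSpace E] {f : α × α × α → E}
    (hf : Summable f) :
    ∑' t : {t : α × α × α // t.2.1 < t.1 ∧ t.2.2 < t.2.1}, f t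
        + ∑' t : {t : α × α × α // t.2.2 < t.2.1 ∧ t.1 < t.2.2}, f t
        + ∑' t : {t : α × α × α // t.1 < t.2.2 ∧ t.2.1 < t.1}, f t + ∑' t, f t
      = ∑' t : {t : α × α × α // t.1 = t.2.1 ∧ t.2.1 = t.2.2}, f t
        + ∑' t : {t : α × α × α // t.2.2 < t.2.1}, f t
        + ∑' t : {t : α × α × α // t.1 < t.2.2}, f t
        + ∑' t : {t : α × α × α // t.2.1 < t.1}, f t := by
  have hsub (P : α × α × α → Prop) : ∑' t : {t // P t}, f t = ∑' t, {t | P t}.indicator f t :=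
    tsum_subtype {t | P t} f
  have hs (s : Set (α × α × α)) := (hf.indicator s).hasSum
  simp only [hsub]
  refine HasSum.unique ((((hs _).add (hs _)).add (hs _)).add hf.hasSum) ?_
  rw [funext (indicator_cyclic_add_eq f)]
  exact (((hs _).add (hs _)).add (hs _)).add (hs _)

end CyclicInclusionExclusion

def rotateTriple {α : Type*} : α × α × α ≃ α × α × α :=
  ⟨fun t => (t.2.1, t.2.2, t.1), fun t => (t.2.2, t.1, t.2.1), fun _ => rfl, fun _ => rfl⟩

theorem Real.summable_one_div_pnat_pow {k : ℕ} (hk : 1 < k) :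
    Summable fun n : ℕ+ => 1 / (n : ℝ) ^ k :=
  (Real.summable_one_div_nat_pow.mpr hk).comp_injective PNat.coe_injective

theorem tsum_mul_tsum_of_nonneg {ι κ : Type*} {f : ι → ℝ} {g : κ → ℝ} (hf : Summable f)
    (hg : Summable g) (hf₀ : 0 ≤ f) (hg₀ : 0 ≤ g) :
    (∑' x, f x) * ∑' y, g y = ∑' z : ι × κ, f z.1 * g z.2 :=
  hf.tsum_mul_tsum hg (hf.mul_of_nonneg hg hf₀ hg₀)

noncomputable def zetaTerm (a b c : ℕ) (t : ℕ+ × ℕ+ × ℕ+) : ℝ :=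
  1 / ((t.1 : ℝ) ^ a * (t.2.1 : ℝ) ^ b * (t.2.2 : ℝ) ^ c)

theorem tsum_zetaTerm_rotate (a b c : ℕ) (P : ℕ+ × ℕ+ × ℕ+ → Prop) :
    ∑' t : {t // P t}, zetaTerm b c a t = ∑' t : {t // P (rotateTriple t)}, zetaTerm a b c t := by
  rw [← (rotateTriple.subtypeEquiv fun _ => Iff.rfl).tsum_eq]
  refine tsum_congr fun t => ?_
  show zetaTerm b c a (rotateTriple t.1) = zetaTerm a b c t.1
  simp only [zetaTerm, rotateTriple, Equiv.coe_fn_mk]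
  ring

theorem zeta2_eq_tsum_pnat (a b : ℕ) :
    zeta2 a b = ∑' q : {q : ℕ+ × ℕ+ // q.2 < q.1}, 1 / ((q.1.1 : ℝ) ^ a * (q.1.2 : ℝ) ^ b) :=
  let e : {p : ℕ × ℕ // p.2 < p.1 ∧ 0 < p.2} ≃ {q : ℕ+ × ℕ+ // q.2 < q.1} :=
    { toFun := fun p => ⟨(⟨p.1.1, p.2.2.trans p.2.1⟩, ⟨p.1.2, p.2.2⟩), p.2.1⟩
      invFun := fun q => ⟨(q.1.1, q.1.2), q.2, q.1.2.pos⟩ }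
  e.tsum_eq fun q => 1 / ((q.1.1 : ℝ) ^ a * (q.1.2 : ℝ) ^ b)

theorem zeta3_eq_tsum_zetaTerm (a b c : ℕ) :
    zeta3 a b c = ∑' t : {t : ℕ+ × ℕ+ × ℕ+ // t.2.1 < t.1 ∧ t.2.2 < t.2.1}, zetaTerm a b c t :=
  let e : {t : ℕ × ℕ × ℕ // t.2.1 < t.1 ∧ t.2.2 < t.2.1 ∧ 0 < t.2.2} ≃
      {t : ℕ+ × ℕ+ × ℕ+ // t.2.1 < t.1 ∧ t.2.2 < t.2.1} :=
    { toFun := fun t => ⟨(⟨t.1.1, t.2.2.2.trans (t.2.2.1.trans t.2.1)⟩,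
        ⟨t.1.2.1, t.2.2.2.trans t.2.2.1⟩, ⟨t.1.2.2, t.2.2.2⟩), t.2.1, t.2.2.1⟩
      invFun := fun t => ⟨(t.1.1, t.1.2.1, t.1.2.2), t.2.1, t.2.2, t.1.2.2.pos⟩ }
  e.tsum_eq (zetaTerm a b c ·)

theorem zeta1_add_add_eq_tsum_zetaTerm (a b c : ℕ) :
    zeta1 (a + b + c) = ∑' t : {t : ℕ+ × ℕ+ × ℕ+ // t.1 = t.2.1 ∧ t.2.1 = t.2.2},
      zetaTerm a b c t := by
  let e : ℕ+ ≃ {t : ℕ+ × ℕ+ × ℕ+ // t.1 = t.2.1 ∧ t.2.1 = t.2.2} :=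
    { toFun := fun n => ⟨(n, n, n), rfl, rfl⟩
      invFun := fun t => t.1.1
      right_inv := fun ⟨(_, _, _), rfl, rfl⟩ => rfl }
  rw [← e.tsum_eq]
  refine tsum_congr fun n => ?_
  simp only [zetaTerm, e, Equiv.coe_fn_mk, pow_add]

theorem summable_zetaTerm {a b c : ℕ} (ha : 1 < a) (hb : 1 < b) (hc : 1 < c) :
    Summable (zetaTerm a b c) :=
  ((Real.summable_one_div_pnat_pow ha).mul_of_nonneg
    ((Real.summable_one_div_pnat_pow hb).mul_of_nonneg (Real.summable_one_div_pnat_pow hc)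
      (fun _ => by positivity) fun _ => by positivity)
    (fun _ => by positivity) fun _ => by positivity).congr fun t => by
      simp only [zetaTerm]; ring

theorem zeta1_mul_zeta2_eq_tsum_zetaTerm {a b c : ℕ} (ha : 1 < a) (hb : 1 < b) (hc : 1 < c) :
    zeta1 a * zeta2 b c = ∑' t : {t : ℕ+ × ℕ+ × ℕ+ // t.2.2 < t.2.1}, zetaTerm a b c t := by
  let e : ℕ+ × {q : ℕ+ × ℕ+ // q.2 < q.1} ≃ {t : ℕ+ × ℕ+ × ℕ+ // t.2.2 < t.2.1} :=
    ⟨fun x => ⟨(x.1, x.2.1), x.2.2⟩, fun t => (t.1.1, ⟨t.1.2, t.2⟩), fun _ => rfl, fun _ => rfl⟩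
  have hbc : Summable fun q : {q : ℕ+ × ℕ+ // q.2 < q.1} =>
      1 / ((q.1.1 : ℝ) ^ b * (q.1.2 : ℝ) ^ c) :=
    (((Real.summable_one_div_pnat_pow hb).mul_of_nonneg (Real.summable_one_div_pnat_pow hc)
      (fun _ => by positivity) fun _ => by positivity).congr
        fun q => one_div_mul_one_div _ _).subtype _
  rw [zeta2_eq_tsum_pnat, zeta1, tsum_mul_tsum_of_nonneg (Real.summable_one_div_pnat_pow ha) hbc
    (fun _ => by positivity) (fun _ => by positivity), ← e.symm.tsum_eq]
  refine tsum_congr fun t => ?_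
  simp only [zetaTerm, e, Equiv.coe_fn_symm_mk]
  ring

theorem zeta1_mul_zeta1_mul_zeta1_eq_tsum_zetaTerm {a b c : ℕ}
    (ha : 1 < a) (hb : 1 < b) (hc : 1 < c) :
    zeta1 a * zeta1 b * zeta1 c = ∑' t, zetaTerm a b c t := by
  have hb' := Real.summable_one_div_pnat_pow hb
  have hc' := Real.summable_one_div_pnat_pow hc
  rw [zeta1, zeta1, zeta1, mul_assoc, tsum_mul_tsum_of_nonneg hb' hc' (fun _ => by positivity)
    (fun _ => by positivity), tsum_mul_tsum_of_nonneg (Real.summable_one_div_pnat_pow ha)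
    (hb'.mul_of_nonneg hc' (fun _ => by positivity) fun _ => by positivity)
    (fun _ => by positivity) (fun _ => by positivity)]
  refine tsum_congr fun t => ?_
  simp only [zetaTerm]
  ring

theorem three_point_identity (a b c : ℕ) (ha : 2 ≤ a) (hb : 2 ≤ b) (hc : 2 ≤ c) :
    zeta3 a b c =
      -zeta3 b c a - zeta3 c a b + zeta1 (a + b + c) + zeta1 a * zeta2 b c
        + zeta1 b * zeta2 c a + zeta1 c * zeta2 a b
        - zeta1 a * zeta1 b * zeta1 c := by
  have hbca : zeta3 b c a =
      ∑' t : {t : ℕ+ × ℕ+ × ℕ+ // t.2.2 < t.2.1 ∧ t.1 < t.2.2}, zetaTerm a b c t :=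
    (zeta3_eq_tsum_zetaTerm b c a).trans (tsum_zetaTerm_rotate a b c _)
  have hcab : zeta3 c a b =
      ∑' t : {t : ℕ+ × ℕ+ × ℕ+ // t.1 < t.2.2 ∧ t.2.1 < t.1}, zetaTerm a b c t :=
    (zeta3_eq_tsum_zetaTerm c a b).trans
      ((tsum_zetaTerm_rotate b c a _).trans (tsum_zetaTerm_rotate a b c _))
  have hb_ca : zeta1 b * zeta2 c a =
      ∑' t : {t : ℕ+ × ℕ+ × ℕ+ // t.1 < t.2.2}, zetaTerm a b c t :=
    (zeta1_mul_zeta2_eq_tsum_zetaTerm hb hc ha).trans (tsum_zetaTerm_rotate a b c _)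
  have hc_ab : zeta1 c * zeta2 a b =
      ∑' t : {t : ℕ+ × ℕ+ × ℕ+ // t.2.1 < t.1}, zetaTerm a b c t :=
    (zeta1_mul_zeta2_eq_tsum_zetaTerm hc ha hb).trans
      ((tsum_zetaTerm_rotate b c a _).trans (tsum_zetaTerm_rotate a b c _))
  have key := tsum_cyclic_add_eq (summable_zetaTerm ha hb hc)
  rw [← zeta3_eq_tsum_zetaTerm, ← hbca, ← hcab, ← zeta1_add_add_eq_tsum_zetaTerm,
    ← zeta1_mul_zeta2_eq_tsum_zetaTerm ha hb hc, ← hb_ca, ← hc_ab,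
    ← zeta1_mul_zeta1_mul_zeta1_eq_tsum_zetaTerm ha hb hc] at key
  linarith
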